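/- Let L/K be a finite Galois field extension, G a group acting on L via a surjection onto Gal(L/K) with kernel H. For V, W semilinear representations of G over L, the natural K-linear map L ⊗_K Hom_{L⋊G}(V, W) → Hom_{L[H]}(V|_H, W|_H), λ ⊗ f ↦ λ·f, is an isomorphism. In particular dim_K Hom_{L⋊G}(V,W) = dim_L Hom_{L[H]}(V|_H, W|_H). -/

import Mathlib

/-! The conjugation action `g • f = ρW g ∘ f ∘ ρV g⁻¹` makes `V →ₗ[K] W` a `σ`-semilinear
representation of `G`; `Hom_{L[H]}` is an `L`-subspace stable under it on which `H = ker σ`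
acts trivially, and `Hom_{L⋊G}` is its subspace of invariants. Galois descent then applies:
`K`-independent invariant vectors stay `L`-independent (apply every `τ ∈ Gal(L/K)` to a
relation and take traces, the trace form being nondegenerate), and the invariants
`∑ τ, τ • (μ • f)` span `f` over `L`, since by Dedekind's independence of characters a
functional killing all of them kills `f`. -/

open scoped TensorProduct

variable {K L : Type*} [Field K] [Field L] [Algebra K L]
variable {G : Type*} [Group G]
variable {V W : Type*} [AddCommGroup V] [Module K V] [Module L V] [IsScalarTower K L V]
  [AddCommGroup W] [Module K W] [Module L W] [IsScalarTower K L W]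

/-- `Hom_{L⋊G}(V, W)`: the `K`-vector space of `L`-linear `G`-equivariant maps between
two semilinear representations, as a `K`-submodule of `V →ₗ[K] W`. -/
def homSL (σ : G →* (L ≃ₐ[K] L))
    (ρV : G →* (V ≃ₗ[K] V)) (ρW : G →* (W ≃ₗ[K] W)) :
    Submodule K (V →ₗ[K] W) where
  carrier := {f | (∀ (c : L) (v : V), f (c • v) = c • f v) ∧
    ∀ (g : G) (v : V), f (ρV g v) = ρW g (f v)}
  add_mem' := by
    intro f g hf hg
    exact ⟨fun c v => by simp [hf.1, hg.1], fun g' v => by simp [hf.2, hg.2]⟩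
  zero_mem' := ⟨fun c v => by simp, fun g v => by simp⟩
  smul_mem' := by
    intro c f hf
    refine ⟨fun a v => ?_, fun g v => by simp [hf.2]⟩
    rw [LinearMap.smul_apply, LinearMap.smul_apply, hf.1, smul_comm]

/-- `Hom_{L[H]}(V|_H, W|_H)`: the `L`-vector space of `L`-linear `H`-equivariant maps
(`H = ker σ`), as an `L`-submodule of `V →ₗ[K] W`. -/
def homH (σ : G →* (L ≃ₐ[K] L))
    (ρV : G →* (V ≃ₗ[K] V)) (ρW : G →* (W ≃ₗ[K] W))
    (hρW : ∀ g (c : L) (w : W), ρW g (c • w) = σ g c • ρW g w) :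
    Submodule L (V →ₗ[K] W) where
  carrier := {f | (∀ (c : L) (v : V), f (c • v) = c • f v) ∧
    ∀ h ∈ σ.ker, ∀ v : V, f (ρV h v) = ρW h (f v)}
  add_mem' := by
    intro f g hf hg
    exact ⟨fun c v => by simp [hf.1, hg.1], fun h hh v => by simp [hf.2 h hh, hg.2 h hh]⟩
  zero_mem' := ⟨fun c v => by simp, fun h hh v => by simp⟩
  smul_mem' := by
    intro a f hf
    refine ⟨fun c v => ?_, fun h hh v => ?_⟩
    · rw [LinearMap.smul_apply, LinearMap.smul_apply, hf.1, smul_comm]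
    · have h1 : σ h = 1 := by rwa [MonoidHom.mem_ker] at hh
      rw [LinearMap.smul_apply, LinearMap.smul_apply, hf.2 h hh, hρW h a (f v), h1]
      simp

/-- The natural map `L ⊗_K Hom_{L⋊G}(V, W) → V →ₗ[K] W`, `λ ⊗ f ↦ λ • f`. -/
noncomputable def natMap (σ : G →* (L ≃ₐ[K] L))
    (ρV : G →* (V ≃ₗ[K] V)) (ρW : G →* (W ≃ₗ[K] W)) :
    L ⊗[K] (homSL σ ρV ρW) →ₗ[K] (V →ₗ[K] W) :=
  TensorProduct.lift
    (LinearMap.mk₂ K (fun (a : L) (f : homSL σ ρV ρW) => a • (f : V →ₗ[K] W))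
      (fun a b f => add_smul a b _)
      (fun c a f => smul_assoc c a _)
      (fun a f g => by simp only [Submodule.coe_add, smul_add])
      (fun a c f => by
        simp only [SetLike.val_smul]
        exact (smul_comm a c (f : V →ₗ[K] W)).symm))

theorem AlgEquiv.eq_zero_of_forall_sum_mul_apply_eq_zero [FiniteDimensional K L]
    {a : (L ≃ₐ[K] L) → L} (h : ∀ μ : L, ∑ τ, a τ * τ μ = 0) (τ : L ≃ₐ[K] L) : a τ = 0 := by
  have hind : LinearIndependent L (fun τ : L ≃ₐ[K] L => ((τ : L →* L) : L → L)) :=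
    (linearIndependent_monoidHom L L).comp _ fun τ υ hτυ =>
      AlgEquiv.ext fun μ => DFunLike.congr_fun hτυ μ
  exact Fintype.linearIndependent_iff.mp hind a (funext fun μ => by simpa using h μ) τ

section GaloisDescent

variable {X : Type*} [AddCommGroup X] [Module K X] {σ : G →* (L ≃ₐ[K] L)}
  {ρ : Representation K G X}

theorem Representation.apply_eq_of_map_eq {x : X} (hx : ∀ h ∈ σ.ker, ρ h x = x) {g g' : G}
    (hgg' : σ g = σ g') : ρ g x = ρ g' x := by
  have hker : g'⁻¹ * g ∈ σ.ker := by
    rw [MonoidHom.mem_ker, map_mul, map_inv, hgg', inv_mul_cancel]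
  rw [← mul_inv_cancel_left g' g, map_mul, Module.End.mul_apply, hx _ hker]

theorem sum_surjInv_mem_invariants [FiniteDimensional K L] (hσ : Function.Surjective σ) {x : X}
    (hx : ∀ h ∈ σ.ker, ρ h x = x) :
    ∑ τ, ρ (Function.surjInv hσ τ) x ∈ ρ.invariants := by
  intro g
  have hshift : ∀ τ,
      ρ g (ρ (Function.surjInv hσ τ) x) = ρ (Function.surjInv hσ (σ g * τ)) x := by
    intro τ
    rw [← Module.End.mul_apply, ← map_mul]
    exact Representation.apply_eq_of_map_eq hx (by simp [Function.surjInv_eq hσ])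
  rw [map_sum, Finset.sum_congr rfl fun τ _ => hshift τ]
  exact Fintype.sum_equiv (Equiv.mulLeft (σ g)) _ _ fun τ => rfl

variable [Module L X] [IsScalarTower K L X]

variable (σ ρ) in
def IsSemilinear : Prop :=
  ∀ g (c : L) (x : X), ρ g (c • x) = σ g c • ρ g x

variable [FiniteDimensional K L]

theorem le_span_invariants (hσ : Function.Surjective σ) (hρ : IsSemilinear σ ρ)
    {N : Submodule L X} (hNG : ∀ g, ∀ x ∈ N, ρ g x ∈ N)
    (hNH : ∀ h ∈ σ.ker, ∀ x ∈ N, ρ h x = x) :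
    N ≤ Submodule.span L (N.restrictScalars K ⊓ ρ.invariants : Set X) := by
  intro x hx
  by_contra hspan
  obtain ⟨ℓ, hℓx, hℓ⟩ := Submodule.exists_le_ker_of_notMem hspan
  set s := Function.surjInv hσ
  have htr : ∀ μ : L, ∑ τ, ρ (s τ) (μ • x) ∈ N.restrictScalars K ⊓ ρ.invariants := fun μ =>
    ⟨N.sum_mem fun τ _ => hNG _ _ (N.smul_mem μ hx),
      sum_surjInv_mem_invariants hσ fun h hh => hNH h hh _ (N.smul_mem μ hx)⟩
  have hdedekind : ∀ μ : L, ∑ τ, ℓ (ρ (s τ) x) * τ μ = 0 := by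
    intro μ
    have := hℓ (Submodule.subset_span (htr μ))
    simpa [map_sum, hρ _ μ, s, Function.surjInv_eq hσ, mul_comm] using this
  have hs1 : ρ (s 1) x = x := hNH _ (by simp [s, Function.surjInv_eq hσ]) x hx
  exact hℓx (hs1 ▸ AlgEquiv.eq_zero_of_forall_sum_mul_apply_eq_zero hdedekind 1)

theorem span_invariants_eq (hσ : Function.Surjective σ) (hρ : IsSemilinear σ ρ)
    {N : Submodule L X} (hNG : ∀ g, ∀ x ∈ N, ρ g x ∈ N)
    (hNH : ∀ h ∈ σ.ker, ∀ x ∈ N, ρ h x = x) :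
    Submodule.span L (N.restrictScalars K ⊓ ρ.invariants : Set X) = N :=
  le_antisymm (Submodule.span_le.mpr fun _ hx => hx.1) (le_span_invariants hσ hρ hNG hNH)

variable [IsGalois K L]

theorem linearIndependent_of_mem_invariants (hσ : Function.Surjective σ) (hρ : IsSemilinear σ ρ)
    {ι : Type*} {m : ι → X} (hm : ∀ i, m i ∈ ρ.invariants) (hK : LinearIndependent K m) :
    LinearIndependent L m := by
  classical
  rw [linearIndependent_iff']
  intro s c hc i hi
  have hconj : ∀ τ : L ≃ₐ[K] L, ∑ j ∈ s, τ (c j) • m j = 0 := by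
    intro τ
    obtain ⟨g, rfl⟩ := hσ τ
    simpa [map_sum, hρ g, hm _ g] using congrArg (ρ g) hc
  have htrace : ∀ μ : L, ∑ j ∈ s, Algebra.trace K L (μ * c j) • m j = 0 := by
    intro μ
    calc ∑ j ∈ s, Algebra.trace K L (μ * c j) • m j
        = ∑ τ : L ≃ₐ[K] L, τ μ • ∑ j ∈ s, τ (c j) • m j := by
          simp_rw [← algebraMap_smul L (Algebra.trace K L _), trace_eq_sum_automorphisms,
            Finset.sum_smul, Finset.smul_sum, smul_smul, map_mul]
          exact Finset.sum_comm
      _ = 0 := by simp [hconj]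
  refine (traceForm_nondegenerate K L).1 (c i) fun μ => ?_
  rw [Algebra.traceForm_apply, mul_comm]
  exact linearIndependent_iff'.mp hK s _ (htrace μ) i hi

theorem liftBaseChange_subtype_injective (hσ : Function.Surjective σ) (hρ : IsSemilinear σ ρ)
    {F : Submodule K X} (hF : F ≤ ρ.invariants) :
    Function.Injective (F.subtype.liftBaseChange L) := by
  let b := Module.Basis.ofVectorSpace K F
  refine LinearMap.injective_of_linearIndependent (Algebra.TensorProduct.basis L b).span_eq ?_
  have hb : LinearIndependent K (fun i => (b i : X)) :=
    b.linearIndependent.map' F.subtype (Submodule.ker_subtype F)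
  simpa [Function.comp_def] using
    linearIndependent_of_mem_invariants hσ hρ (fun i => hF (b i).2) hb

end GaloisDescent

theorem MonoidHom.linearEquiv_apply_apply {M : Type*} [AddCommGroup M] [Module K M]
    (ρ : G →* (M ≃ₗ[K] M)) (g g' : G) (x : M) : ρ g (ρ g' x) = ρ (g * g') x := by
  rw [map_mul]
  rfl

section SemilinearHom

omit [IsScalarTower K L V]

variable {σ : G →* (L ≃ₐ[K] L)} (ρV : G →* (V ≃ₗ[K] V)) (ρW : G →* (W ≃ₗ[K] W))

def homRep : Representation K G (V →ₗ[K] W) :=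
  Representation.linHom (LinearEquiv.automorphismGroup.toLinearMapMonoidHom.comp ρV)
    (LinearEquiv.automorphismGroup.toLinearMapMonoidHom.comp ρW)

theorem homRep_apply (g : G) (f : V →ₗ[K] W) (v : V) :
    homRep ρV ρW g f v = ρW g (f (ρV g⁻¹ v)) := rfl

variable {ρV ρW}

omit [Module L V] in
theorem isSemilinear_homRep (hρW : ∀ g (c : L) (w : W), ρW g (c • w) = σ g c • ρW g w) :
    IsSemilinear σ (homRep ρV ρW) := fun g c f => by
  ext v
  simp [homRep_apply, hρW]

variable (hρW : ∀ g (c : L) (w : W), ρW g (c • w) = σ g c • ρW g w)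

theorem homRep_apply_mem_homH (hρV : ∀ g (c : L) (v : V), ρV g (c • v) = σ g c • ρV g v)
    (g : G) {f : V →ₗ[K] W} (hf : f ∈ homH σ ρV ρW hρW) :
    homRep ρV ρW g f ∈ homH σ ρV ρW hρW := by
  refine ⟨fun c v => ?_, fun h hh v => ?_⟩
  · rw [homRep_apply, homRep_apply, hρV, hf.1, hρW, ← AlgEquiv.mul_apply, ← map_mul,
      mul_inv_cancel, map_one, AlgEquiv.one_apply]
  · have hconj : g⁻¹ * h * g ∈ σ.ker := by
      simpa using (MonoidHom.normal_ker σ).conj_mem h hh g⁻¹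
    have hcomm := hf.2 _ hconj (ρV g⁻¹ v)
    simp only [homRep_apply, MonoidHom.linearEquiv_apply_apply] at hcomm ⊢
    rw [show g⁻¹ * h = g⁻¹ * h * g * g⁻¹ by group, hcomm, MonoidHom.linearEquiv_apply_apply]
    group

theorem homRep_apply_eq_self {h : G} (hh : h ∈ σ.ker) {f : V →ₗ[K] W}
    (hf : f ∈ homH σ ρV ρW hρW) : homRep ρV ρW h f = f := by
  ext v
  rw [homRep_apply, hf.2 _ (inv_mem hh), MonoidHom.linearEquiv_apply_apply, mul_inv_cancel,
    map_one, LinearEquiv.coe_one, id_eq]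

theorem homSL_eq_inf_invariants :
    homSL σ ρV ρW = (homH σ ρV ρW hρW).restrictScalars K ⊓ (homRep ρV ρW).invariants := by
  ext f
  refine ⟨fun hf => ⟨⟨hf.1, fun h _ => hf.2 h⟩, fun g => ?_⟩,
    fun ⟨hf, hfix⟩ => ⟨hf.1, fun g v => ?_⟩⟩
  · ext v
    rw [homRep_apply, hf.2, MonoidHom.linearEquiv_apply_apply, mul_inv_cancel, map_one,
      LinearEquiv.coe_one, id_eq]
  · have hg := DFunLike.congr_fun (hfix g) (ρV g v)
    rw [homRep_apply, MonoidHom.linearEquiv_apply_apply, inv_mul_cancel, map_one,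
      LinearEquiv.coe_one, id_eq] at hg
    exact hg.symm

variable (σ ρV ρW) in
theorem natMap_eq_liftBaseChange :
    natMap σ ρV ρW = ((homSL σ ρV ρW).subtype.liftBaseChange L).restrictScalars K :=
  TensorProduct.ext' fun _ _ => rfl

end SemilinearHom

theorem stmt9 [FiniteDimensional K L] [IsGalois K L]
    (σ : G →* (L ≃ₐ[K] L)) (hσ : Function.Surjective σ)
    (ρV : G →* (V ≃ₗ[K] V)) (hρV : ∀ g (c : L) (v : V), ρV g (c • v) = σ g c • ρV g v)
    (ρW : G →* (W ≃ₗ[K] W)) (hρW : ∀ g (c : L) (w : W), ρW g (c • w) = σ g c • ρW g w) :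
    Function.Injective (natMap σ ρV ρW) ∧
    Set.range (natMap σ ρV ρW) = (homH σ ρV ρW hρW : Set (V →ₗ[K] W)) ∧
    Module.finrank K (homSL σ ρV ρW) = Module.finrank L (homH σ ρV ρW hρW) := by
  have hsemi := isSemilinear_homRep (ρV := ρV) hρW
  set φ := (homSL σ ρV ρW).subtype.liftBaseChange L
  have hinj : Function.Injective φ :=
    liftBaseChange_subtype_injective hσ hsemi ((homSL_eq_inf_invariants hρW).le.trans inf_le_right)
  have hrange : LinearMap.range φ = homH σ ρV ρW hρW := by
    rw [LinearMap.range_liftBaseChange, Submodule.range_subtype, homSL_eq_inf_invariants hρW]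
    exact span_invariants_eq hσ hsemi (homRep_apply_mem_homH hρW hρV)
      (fun _ hh _ hf => homRep_apply_eq_self hρW hh hf)
  refine ⟨natMap_eq_liftBaseChange σ ρV ρW ▸ hinj, ?_, ?_⟩
  · rw [natMap_eq_liftBaseChange, LinearMap.coe_restrictScalars, ← LinearMap.coe_range, hrange]
  · calc Module.finrank K (homSL σ ρV ρW)
        = Module.finrank L (L ⊗[K] homSL σ ρV ρW) := Module.finrank_baseChange.symm
      _ = Module.finrank L (homH σ ρV ρW hρW) := by
        rw [(LinearEquiv.ofInjective _ hinj).finrank_eq, hrange]
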